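/- If X_M contains no periodic point of the shift, S is countable, φ is summable, and A is finitely irreducible, then the spectral radius of the transfer operator L_M on C_b(X) is zero. In particular, any M-admissible finite word consists of pairwise distinct symbols, and for every η > 0 there is a constant c with ‖L_M^n 1‖_∞ ≤ c ηⁿ⁻ᵐ for all large n. -/

import Mathlib

open Filter MeasureTheory Topology
open scoped ENNReal NNReal BigOperators

namespace TMS

variable {S : Type*}

/-- prepend a symbol to a one-sided sequence -/
def cons (a : S) (ω : ℕ → S) : ℕ → S
  | 0 => a
  | n + 1 => ω n

/-- the shift transformation -/
def shift (ω : ℕ → S) : ℕ → S := fun n => ω (n + 1)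

/-- the (one-sided) topological Markov shift with transition matrix `A` -/
def markovShift (A : S → S → Prop) : Set (ℕ → S) := {ω | ∀ n, A (ω n) (ω (n + 1))}

/-- the cylinder set of a word of length `n`, inside `X` -/
def cylW (X : Set (ℕ → S)) (n : ℕ) (w : Fin n → S) : Set (ℕ → S) :=
  {ω | ω ∈ X ∧ ∀ i : Fin n, ω i = w i}

/-- the cylinder set of a single symbol, inside `X` -/
def cyl1 (X : Set (ℕ → S)) (s : S) : Set (ℕ → S) := {ω | ω ∈ X ∧ ω 0 = s}

/-- Birkhoff sum `S_n φ` -/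
noncomputable def birkhoff (φ : (ℕ → S) → ℝ) (n : ℕ) (ω : ℕ → S) : ℝ :=
  ∑ i ∈ Finset.range n, φ (shift^[i] ω)

open Classical in
/-- the metric `d_θ` -/
noncomputable def dtheta (θ : ℝ) (ω υ : ℕ → S) : ℝ :=
  if ω = υ then 0 else θ ^ sInf {n | ω n ≠ υ n}

/-- supremum norm over `X` -/
noncomputable def supNorm (X : Set (ℕ → S)) (f : (ℕ → S) → ℝ) : ℝ :=
  sSup ((fun ω => |f ω|) '' X)

/-- `C` is a bound witnessing `[f]_k ≤ C`, i.e. `var_n f ≤ C θ^n` for all `n ≥ k`. -/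
def LipBound (X : Set (ℕ → S)) (θ : ℝ) (k : ℕ) (f : (ℕ → S) → ℝ) (C : ℝ) : Prop :=
  ∀ n, k ≤ n → ∀ ω, ω ∈ X → ∀ υ, υ ∈ X → (∀ i, i < n → ω i = υ i) →
    |f ω - f υ| ≤ C * θ ^ n

/-- the seminorm `[f]_k` -/
noncomputable def lipSemi (X : Set (ℕ → S)) (θ : ℝ) (k : ℕ) (f : (ℕ → S) → ℝ) : ℝ :=
  sInf {C | 0 ≤ C ∧ LipBound X θ k f C}

/-- the norm `‖f‖_k = ‖f‖_∞ + [f]_k` -/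
noncomputable def normK (X : Set (ℕ → S)) (θ : ℝ) (k : ℕ) (f : (ℕ → S) → ℝ) : ℝ :=
  supNorm X f + lipSemi X θ k f

/-- `φ` is summable: `Σ_{s : [s] ≠ ∅} exp (sup_{[s]} φ) < ∞` -/
def SummableOn (X : Set (ℕ → S)) (φ : (ℕ → S) → ℝ) : Prop :=
  (∀ s : S, BddAbove (φ '' cyl1 X s)) ∧
    Summable (fun s : {s : S // (cyl1 X s).Nonempty} => Real.exp (sSup (φ '' cyl1 X s.1)))

/-- finite irreducibility of a transition matrix -/
def FinitelyIrreducible (A : S → S → Prop) : Prop :=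
  ∃ F : Finset (List S), ∀ a b : S, ∃ w ∈ F, List.Chain' A (a :: (w ++ [b]))

/-- `X` contains a periodic point of the shift -/
def HasPeriodicPoint (X : Set (ℕ → S)) : Prop :=
  ∃ ω, ω ∈ X ∧ ∃ m, 0 < m ∧ shift^[m] ω = ω

/-- the Ruelle transfer operator `L_M` associated to `M` and the potential `φ` -/
noncomputable def transfer (M : S → S → Prop) (φ : (ℕ → S) → ℝ)
    (f : (ℕ → S) → ℝ) : (ℕ → S) → ℝ :=
  fun ω => ∑' a : {a : S // M a (ω 0)}, Real.exp (φ (cons a ω)) * f (cons a ω)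

section Top

variable [TopologicalSpace S]

/-- the cone `Λ^k_c` -/
def cone (X : Set (ℕ → S)) (θ : ℝ) (k : ℕ) (c : ℝ) : Set ((ℕ → S) → ℝ) :=
  {f | ContinuousOn f X ∧ (∀ ω ∈ X, 0 ≤ f ω) ∧
    ∀ ω ∈ X, ∀ υ ∈ X, (∀ i, i < k → ω i = υ i) →
      f ω ≤ Real.exp (c * dtheta θ ω υ) * f υ}

/-- the space `C_b(X)` of bounded continuous functions -/
def Cb (X : Set (ℕ → S)) : Set ((ℕ → S) → ℝ) :=
  {f | ContinuousOn f X ∧ BddAbove ((fun ω => |f ω|) '' X)}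

/-- the space `F^k_b(X)` of bounded weak-Lipschitz functions -/
def Fkb (X : Set (ℕ → S)) (θ : ℝ) (k : ℕ) : Set ((ℕ → S) → ℝ) :=
  {f | f ∈ Cb X ∧ ∃ C, LipBound X θ k f C}

end Top

/-- operator norm of `L` on the space `F` with norm `N` -/
noncomputable def opNorm (N : ((ℕ → S) → ℝ) → ℝ) (F : Set ((ℕ → S) → ℝ))
    (L : ((ℕ → S) → ℝ) → (ℕ → S) → ℝ) : ℝ :=
  sSup {r | ∃ f ∈ F, N f ≤ 1 ∧ r = N (L f)}

/-- spectral radius of `L` on `(F, N)` via the Gelfand formula -/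
noncomputable def specRad (N : ((ℕ → S) → ℝ) → ℝ) (F : Set ((ℕ → S) → ℝ))
    (L : ((ℕ → S) → ℝ) → (ℕ → S) → ℝ) : ℝ :=
  Filter.limsup (fun n : ℕ => (opNorm N F (L^[n])) ^ ((1 : ℝ) / n)) Filter.atTop

/-- the `n`-th partition function `Σ_{w ∈ Sⁿ, [w] ≠ ∅} exp (sup_{[w]} S_n φ)` -/
noncomputable def partition (X : Set (ℕ → S)) (φ : (ℕ → S) → ℝ) (n : ℕ) : ℝ≥0∞ :=
  ∑' w : {w : Fin n → S // (cylW X n w).Nonempty},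
    ENNReal.ofReal (Real.exp (sSup (birkhoff φ n '' cylW X n w.1)))

/-- `P` is the topological pressure of `φ` on `X` -/
def IsPressure (X : Set (ℕ → S)) (φ : (ℕ → S) → ℝ) (P : ℝ) : Prop :=
  Filter.Tendsto (fun n : ℕ => Real.log (partition X φ n).toReal / (n : ℝ))
    Filter.atTop (nhds P)

/-- there is an `M`-path from `a` to `b` (of length at least one) -/
def reaches (M : S → S → Prop) (a b : S) : Prop :=
  ∃ l : List S, List.Chain M a (l ++ [b])

/-- communication relation `a ↔ b` -/
def comm (M : S → S → Prop) (a b : S) : Prop :=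
  a = b ∨ (reaches M a b ∧ reaches M b a)

/-- the submatrix of `M` indexed by `T` -/
def restrictM (M : S → S → Prop) (T : Set S) : S → S → Prop :=
  fun a b => M a b ∧ a ∈ T ∧ b ∈ T

/-- support of a Borel measure -/
def msupport [TopologicalSpace S] [MeasurableSpace S] (ν : Measure (ℕ → S)) :
    Set (ℕ → S) :=
  {ω | ∀ U : Set (ℕ → S), IsOpen U → ω ∈ U → 0 < ν U}

end TMS

/-!
Without periodic points no symbol can occur twice in an `M`-admissible word: the word between
two occurrences would close up into a cycle, whose periodic repetition lies in `X_M`.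

Choose a finite `T ⊆ S` outside of which the weights `g s = exp (sup_{[s]} φ)` sum to less than
`η`. Expanding `L_M^n f (ω)` along backward `M`-paths ending at `ω₀`, each symbol of `T` can be
used at most once, so at most `m = #T` steps cost `∑_{s ∈ T} g s ≤ P` while every other step costs
at most `η`. Inducting on `n` while tracking the number `t` of symbols of `T` that can still reach
the current first symbol gives `‖L_M^n f‖_∞ ≤ P^m (n+1)^m η^(n-m)`. Running this with `η / 2`
absorbs the polynomial factor, and a bound `c ηⁿ⁻ᵐ` for every `η > 0` forces the Gelfand limit
`‖L_M^n‖^(1/n)` to vanish.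
-/

namespace TMS

variable {S : Type*}

theorem shift_iterate_apply (k : ℕ) (ω : ℕ → S) (n : ℕ) : shift^[k] ω n = ω (n + k) := by
  induction k generalizing ω with
  | zero => rfl
  | succ k ih => rw [Function.iterate_succ_apply, ih]; rfl

theorem cons_mem_markovShift {A : S → S → Prop} {a : S} {ω : ℕ → S} (hω : ω ∈ markovShift A)
    (ha : A a (ω 0)) : cons a ω ∈ markovShift A
  | 0 => ha
  | n + 1 => hω n

theorem getD_append_singleton_eq_getD_mod (a : S) (l : List S) {j : ℕ} (hj : j ≤ l.length + 1) :
    (a :: l ++ [a]).getD j a = (a :: l).getD (j % (l.length + 1)) a := by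
  rcases hj.lt_or_eq with hj | rfl
  · rw [List.getD_append _ _ _ _ (by simpa using hj), Nat.mod_eq_of_lt hj]
  · simp

theorem hasPeriodicPoint_of_isChain_cycle {M : S → S → Prop} {a : S} {l : List S}
    (h : List.IsChain M (a :: (l ++ [a]))) : HasPeriodicPoint (markovShift M) := by
  have hp : 0 < l.length + 1 := l.length.succ_pos
  refine ⟨fun n => (a :: l).getD (n % (l.length + 1)) a, fun n => ?_, l.length + 1, hp, ?_⟩
  · have hi : n % (l.length + 1) < l.length + 1 := Nat.mod_lt _ hp
    have hM := List.isChain_iff_getElem.1 h (n % (l.length + 1)) (by simp; omega)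
    rwa [← List.getD_eq_getElem _ a, ← List.getD_eq_getElem _ a, ← List.cons_append,
      getD_append_singleton_eq_getD_mod a l hi.le, getD_append_singleton_eq_getD_mod a l hi,
      Nat.mod_mod, Nat.succ_eq_add_one, Nat.mod_add_mod] at hM
  · funext n
    simp [shift_iterate_apply]

theorem reaches_of_rel {M : S → S → Prop} {a b : S} (h : M a b) : reaches M a b :=
  ⟨[], List.isChain_pair.2 h⟩

theorem reaches.trans_rel {M : S → S → Prop} {a b c : S} (hab : reaches M a b) (hbc : M b c) :
    reaches M a c := by
  obtain ⟨l, hl⟩ := hab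
  refine ⟨l ++ [b], ?_⟩
  rw [List.append_assoc, List.singleton_append]
  exact List.isChain_cons_split.2 ⟨hl, List.isChain_pair.2 hbc⟩

theorem not_reaches_self_of_not_hasPeriodicPoint {M : S → S → Prop}
    (h : ¬ HasPeriodicPoint (markovShift M)) (a : S) : ¬ reaches M a a :=
  fun ⟨_, hl⟩ => h (hasPeriodicPoint_of_isChain_cycle hl)

theorem nodup_of_isChain {M : S → S → Prop} (hM : ∀ a, ¬ reaches M a a) :
    ∀ {l : List S}, l.IsChain M → l.Nodup
  | [], _ => List.nodup_nil
  | a :: l, h => by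
    refine List.nodup_cons.2 ⟨fun hal => ?_, nodup_of_isChain hM h.tail⟩
    obtain ⟨s, t, rfl⟩ := List.append_of_mem hal
    exact hM a ⟨s, (List.isChain_cons_split.1 h).1⟩

section Weights

variable {X : Set (ℕ → S)} {φ : (ℕ → S) → ℝ}

noncomputable def supWeight (X : Set (ℕ → S)) (φ : (ℕ → S) → ℝ) : S → ℝ :=
  {s | (cyl1 X s).Nonempty}.indicator fun s => Real.exp (sSup (φ '' cyl1 X s))

theorem supWeight_nonneg (s : S) : 0 ≤ supWeight X φ s :=
  Set.indicator_nonneg (fun _ _ => (Real.exp_pos _).le) s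

theorem SummableOn.summable_supWeight (h : SummableOn X φ) : Summable (supWeight X φ) :=
  summable_subtype_iff_indicator.1 h.2

theorem SummableOn.exp_le_supWeight (h : SummableOn X φ) {s : S} {ω : ℕ → S}
    (hω : ω ∈ cyl1 X s) : Real.exp (φ ω) ≤ supWeight X φ s := by
  rw [supWeight, Set.indicator_of_mem (s := {s | (cyl1 X s).Nonempty}) ⟨ω, hω⟩]
  exact Real.exp_le_exp.2 (le_csSup (h.1 s) ⟨ω, hω, rfl⟩)

end Weights

theorem abs_transfer_le {M : S → S → Prop} {φ F : (ℕ → S) → ℝ} {ω : ℕ → S} {g : S → ℝ}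
    (hg : Summable g) (hg0 : ∀ a, 0 ≤ g a)
    (hexp : ∀ a, M a (ω 0) → Real.exp (φ (cons a ω)) ≤ g a) (T : Finset S) {c₁ c₂ : ℝ}
    (hc₁ : 0 ≤ c₁) (hc₂ : 0 ≤ c₂) (h₁ : ∀ a ∈ T, M a (ω 0) → |F (cons a ω)| ≤ c₁)
    (h₂ : ∀ a ∉ T, M a (ω 0) → |F (cons a ω)| ≤ c₂) :
    |transfer M φ F ω| ≤ (∑ a ∈ T, g a) * c₁ + (∑' a : ↑((T : Set S)ᶜ), g a) * c₂ := by
  classical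
  set w : S → ℝ := fun a => g a * if a ∈ T then c₁ else c₂
  have hw0 : ∀ a, 0 ≤ w a := fun a => mul_nonneg (hg0 a) (by split_ifs <;> assumption)
  have hw : Summable w := (hg.mul_right (max c₁ c₂)).of_nonneg_of_le hw0 fun a =>
    mul_le_mul_of_nonneg_left (by split_ifs <;> simp) (hg0 a)
  have hterm : ∀ a : {a // M a (ω 0)},
      ‖Real.exp (φ (cons a.1 ω)) * F (cons a.1 ω)‖ ≤ w a := fun ⟨a, ha⟩ => by
    rw [Real.norm_eq_abs, abs_mul, Real.abs_exp]
    refine mul_le_mul (hexp a ha) ?_ (abs_nonneg _) (hg0 a)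
    split_ifs with haT
    exacts [h₁ a haT ha, h₂ a haT ha]
  calc |transfer M φ F ω| ≤ ∑' a : {a // M a (ω 0)}, w a :=
        tsum_of_norm_bounded (hw.subtype _).hasSum hterm
    _ ≤ ∑' a, w a := hw.tsum_subtype_le w {a | M a (ω 0)} hw0
    _ = ∑ a ∈ T, w a + ∑' a : ↑((T : Set S)ᶜ), w a := hw.sum_add_tsum_compl.symm
    _ = (∑ a ∈ T, g a) * c₁ + (∑' a : ↑((T : Set S)ᶜ), g a) * c₂ := by
      rw [Finset.sum_mul, ← tsum_mul_right]
      congr 1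
      · exact Finset.sum_congr rfl fun a ha => by simp [w, ha]
      · exact tsum_congr fun a => by simp [w, show a.1 ∉ T from a.2]

def decayBound (P η : ℝ) (t n : ℕ) : ℝ := P ^ t * ((n : ℝ) + 1) ^ t * η ^ (n - t)

section DecayBound

variable {P η : ℝ}

theorem decayBound_nonneg (hP : 0 ≤ P) (hη : 0 ≤ η) (t n : ℕ) : 0 ≤ decayBound P η t n := by
  unfold decayBound; positivity

theorem one_le_decayBound_zero (hP : 1 ≤ P) (t : ℕ) : 1 ≤ decayBound P η t 0 := by
  simpa [decayBound] using one_le_pow₀ hP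

theorem decayBound_zero_succ (n : ℕ) : decayBound P η 0 (n + 1) = η * decayBound P η 0 n := by
  simp [decayBound, pow_succ, mul_comm]

theorem decayBound_succ_succ_le (hP : 0 ≤ P) (hη0 : 0 ≤ η) (hη1 : η ≤ 1) (t n : ℕ) :
    P * decayBound P η t n + η * decayBound P η (t + 1) n ≤ decayBound P η (t + 1) (n + 1) := by
  have hη : η * η ^ (n - (t + 1)) ≤ η ^ (n - t) := by
    rw [← pow_succ']
    exact pow_le_pow_of_le_one hη0 hη1 (by omega)
  have hn : ((n : ℝ) + 1) ^ t * (n + 2) ≤ ((n : ℝ) + 2) ^ (t + 1) := by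
    rw [pow_succ]
    gcongr
    linarith
  calc P * decayBound P η t n + η * decayBound P η (t + 1) n
      = P ^ (t + 1) * ((n : ℝ) + 1) ^ t * η ^ (n - t)
        + P ^ (t + 1) * ((n : ℝ) + 1) ^ (t + 1) * (η * η ^ (n - (t + 1))) := by
        simp only [decayBound]; ring
    _ ≤ P ^ (t + 1) * ((n : ℝ) + 1) ^ t * η ^ (n - t)
        + P ^ (t + 1) * ((n : ℝ) + 1) ^ (t + 1) * η ^ (n - t) := by gcongr
    _ = P ^ (t + 1) * (((n : ℝ) + 1) ^ t * (n + 2)) * η ^ (n - t) := by ring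
    _ ≤ P ^ (t + 1) * ((n : ℝ) + 2) ^ (t + 1) * η ^ (n - t) := by gcongr
    _ = decayBound P η (t + 1) (n + 1) := by
      simp only [decayBound, Nat.add_sub_add_right]; push_cast; ring

end DecayBound

section Reaches

open Classical Finset

variable {M : S → S → Prop} {a b : S}

theorem card_filter_reaches_le (T : Finset S) (hab : M a b) :
    #{c ∈ T | reaches M c a} ≤ #{c ∈ T | reaches M c b} :=
  card_le_card (monotone_filter_right _ fun _ _ hc => hc.trans_rel hab)

theorem card_filter_reaches_lt {T : Finset S} (hM : ¬ reaches M a a) (ha : a ∈ T) (hab : M a b) :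
    #{c ∈ T | reaches M c a} < #{c ∈ T | reaches M c b} := by
  refine card_lt_card ((ssubset_iff_of_subset
    (monotone_filter_right _ fun _ _ hc => hc.trans_rel hab)).2 ⟨a, ?_, ?_⟩)
  · exact mem_filter.2 ⟨ha, reaches_of_rel hab⟩
  · exact fun h => hM (mem_filter.1 h).2

variable {A : S → S → Prop} {φ : (ℕ → S) → ℝ} {T : Finset S} {P η : ℝ}

theorem abs_transfer_iterate_le (hMA : ∀ a b, M a b → A a b) (hM : ∀ a, ¬ reaches M a a)
    (hφ : SummableOn (markovShift A) φ) (hP : ∑ a ∈ T, supWeight (markovShift A) φ a ≤ P)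
    (hP1 : 1 ≤ P) (htail : ∑' a : ↑((T : Set S)ᶜ), supWeight (markovShift A) φ a ≤ η)
    (hη0 : 0 ≤ η) (hη1 : η ≤ 1) {f : (ℕ → S) → ℝ} (hf : ∀ ω ∈ markovShift A, |f ω| ≤ 1)
    (n t : ℕ) {ω : ℕ → S} (hω : ω ∈ markovShift A) (ht : #{a ∈ T | reaches M a (ω 0)} ≤ t) :
    |(transfer M φ)^[n] f ω| ≤ decayBound P η t n := by
  induction n generalizing t ω with
  | zero => exact (hf ω hω).trans (one_le_decayBound_zero hP1 t)
  | succ n ih =>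
    have hcons : ∀ a, M a (ω 0) → cons a ω ∈ markovShift A := fun a ha =>
      cons_mem_markovShift hω (hMA _ _ ha)
    have hexp : ∀ a, M a (ω 0) → Real.exp (φ (cons a ω)) ≤ supWeight (markovShift A) φ a :=
      fun a ha => hφ.exp_le_supWeight ⟨hcons a ha, rfl⟩
    have hD0 : ∀ t n, 0 ≤ decayBound P η t n := decayBound_nonneg (by linarith) hη0
    rw [Function.iterate_succ_apply']
    cases t with
    | zero =>
      have hT : ∀ a ∈ T, ¬ M a (ω 0) := fun a ha hab =>
        (card_filter_reaches_lt (hM a) ha hab).not_ge (ht.trans (Nat.zero_le _))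
      calc _ ≤ (∑ a ∈ T, supWeight (markovShift A) φ a) * 0
            + (∑' a : ↑((T : Set S)ᶜ), supWeight (markovShift A) φ a) * decayBound P η 0 n :=
            abs_transfer_le hφ.summable_supWeight supWeight_nonneg hexp T le_rfl (hD0 0 n)
              (fun a ha hab => absurd hab (hT a ha))
              fun a _ hab => ih 0 (hcons a hab) ((card_filter_reaches_le T hab).trans ht)
        _ ≤ η * decayBound P η 0 n := by
          rw [mul_zero, zero_add]; gcongr; exact hD0 0 n
        _ = decayBound P η 0 (n + 1) := (decayBound_zero_succ n).symm
    | succ t =>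
      calc _ ≤ (∑ a ∈ T, supWeight (markovShift A) φ a) * decayBound P η t n
            + (∑' a : ↑((T : Set S)ᶜ), supWeight (markovShift A) φ a) * decayBound P η (t + 1) n :=
            abs_transfer_le hφ.summable_supWeight supWeight_nonneg hexp T (hD0 t n) (hD0 (t + 1) n)
              (fun a ha hab => ih t (hcons a hab)
                (Nat.le_of_lt_succ ((card_filter_reaches_lt (hM a) ha hab).trans_le ht)))
              fun a _ hab => ih (t + 1) (hcons a hab) ((card_filter_reaches_le T hab).trans ht)
        _ ≤ P * decayBound P η t n + η * decayBound P η (t + 1) n := by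
          gcongr <;> apply hD0
        _ ≤ decayBound P η (t + 1) (n + 1) :=
          decayBound_succ_succ_le (by linarith) hη0 hη1 t n

end Reaches

theorem exists_pow_mul_pow_le (m : ℕ) {η₀ η : ℝ} (h0 : 0 ≤ η₀) (h : 2 * η₀ ≤ η) :
    ∃ c, 0 < c ∧ ∀ n : ℕ, ((n : ℝ) + 1) ^ m * η₀ ^ (n - m) ≤ c * η ^ (n - m) := by
  obtain ⟨C, hC⟩ := (tendsto_pow_const_mul_const_pow_of_abs_lt_one m
    (r := 1 / 2) (by norm_num [abs_of_pos])).bddAbove_range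
  refine ⟨2 ^ (m + 1) * max C 1, by positivity, fun n => ?_⟩
  have hhalf : (1 / 2 : ℝ) ^ (n - m) ≤ 2 ^ (m + 1) * (1 / 2) ^ (n + 1) :=
    calc (1 / 2 : ℝ) ^ (n - m) = 2 ^ (m + 1) * ((1 / 2) ^ (n - m) * (1 / 2) ^ (m + 1)) := by
          rw [mul_left_comm, ← mul_pow]; norm_num
      _ ≤ 2 ^ (m + 1) * (1 / 2) ^ (n + 1) := by
          rw [← pow_add]
          exact mul_le_mul_of_nonneg_left
            (pow_le_pow_of_le_one (by norm_num) (by norm_num) (by omega)) (by positivity)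
  have hC' : ((n : ℝ) + 1) ^ m * (1 / 2) ^ (n + 1) ≤ max C 1 :=
    le_max_of_le_left (by exact_mod_cast hC ⟨n + 1, rfl⟩)
  have hη : 0 ≤ η := by linarith
  calc ((n : ℝ) + 1) ^ m * η₀ ^ (n - m)
        ≤ ((n : ℝ) + 1) ^ m * ((1 / 2) ^ (n - m) * η ^ (n - m)) := by
        rw [← mul_pow]; gcongr; linarith
    _ ≤ ((n : ℝ) + 1) ^ m * (2 ^ (m + 1) * (1 / 2) ^ (n + 1) * η ^ (n - m)) := by gcongr
    _ = 2 ^ (m + 1) * (((n : ℝ) + 1) ^ m * (1 / 2) ^ (n + 1)) * η ^ (n - m) := by ring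
    _ ≤ 2 ^ (m + 1) * max C 1 * η ^ (n - m) := by gcongr

section Norms

variable {X : Set (ℕ → S)} {f : (ℕ → S) → ℝ}

theorem supNorm_nonneg (X : Set (ℕ → S)) (f : (ℕ → S) → ℝ) : 0 ≤ supNorm X f :=
  Real.sSup_nonneg (by rintro _ ⟨ω, -, rfl⟩; exact abs_nonneg _)

theorem supNorm_le {C : ℝ} (h : ∀ ω ∈ X, |f ω| ≤ C) (hC : 0 ≤ C) : supNorm X f ≤ C :=
  Real.sSup_le (by rintro _ ⟨ω, hω, rfl⟩; exact h ω hω) hC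

theorem abs_le_supNorm (hf : BddAbove ((fun ω => |f ω|) '' X)) {ω : ℕ → S} (hω : ω ∈ X) :
    |f ω| ≤ supNorm X f :=
  le_csSup hf ⟨ω, hω, rfl⟩

variable {N : ((ℕ → S) → ℝ) → ℝ} {F : Set ((ℕ → S) → ℝ)} {L : ((ℕ → S) → ℝ) → (ℕ → S) → ℝ}

theorem opNorm_nonneg (hN : ∀ f, 0 ≤ N f) : 0 ≤ opNorm N F L :=
  Real.sSup_nonneg (by rintro _ ⟨f, -, -, rfl⟩; exact hN _)

theorem opNorm_le {C : ℝ} (h : ∀ f ∈ F, N f ≤ 1 → N (L f) ≤ C) (hC : 0 ≤ C) :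
    opNorm N F L ≤ C :=
  Real.sSup_le (by rintro _ ⟨f, hf, hf1, rfl⟩; exact h f hf hf1) hC

end Norms

theorem exists_supNorm_transfer_iterate_le {A M : S → S → Prop} {φ : (ℕ → S) → ℝ}
    (hMA : ∀ a b, M a b → A a b) (hM : ∀ a, ¬ reaches M a a) (hφ : SummableOn (markovShift A) φ)
    {η : ℝ} (hη : 0 < η) :
    ∃ c, 0 < c ∧ ∃ m : ℕ, ∀ n : ℕ, ∀ f : (ℕ → S) → ℝ, (∀ ω ∈ markovShift A, |f ω| ≤ 1) →
      supNorm (markovShift A) ((transfer M φ)^[n] f) ≤ c * η ^ (n - m) := by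
  classical
  set g := supWeight (markovShift A) φ
  obtain ⟨η₀, hη₀, hη₀η, hη₀1⟩ : ∃ η₀ : ℝ, 0 < η₀ ∧ 2 * η₀ ≤ η ∧ η₀ ≤ 1 :=
    ⟨min η 1 / 2, by positivity, by linarith [min_le_left η 1], by linarith [min_le_right η 1]⟩
  obtain ⟨T, hT⟩ : ∃ T : Finset S, ∑' a : {a // a ∉ T}, g a < η₀ :=
    ((tendsto_tsum_compl_atTop_zero g).eventually_lt_const hη₀).exists
  obtain ⟨c, hc, hpoly⟩ := exists_pow_mul_pow_le T.card hη₀.le hη₀η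
  set P := max 1 (∑ a ∈ T, g a)
  refine ⟨P ^ T.card * c, by positivity, T.card, fun n f hf =>
    supNorm_le (fun ω hω => ?_) (by positivity)⟩
  calc |(transfer M φ)^[n] f ω| ≤ decayBound P η₀ T.card n :=
        abs_transfer_iterate_le hMA hM hφ (le_max_right _ _) (le_max_left _ _) hT.le hη₀.le
          hη₀1 hf n T.card hω (Finset.card_filter_le _ _)
    _ = P ^ T.card * (((n : ℝ) + 1) ^ T.card * η₀ ^ (n - T.card)) := mul_assoc _ _ _
    _ ≤ P ^ T.card * (c * η ^ (n - T.card)) :=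
        mul_le_mul_of_nonneg_left (hpoly n) (by positivity)
    _ = P ^ T.card * c * η ^ (n - T.card) := (mul_assoc _ _ _).symm

theorem eventually_le_pow_of_forall_le_mul_pow {r : ℕ → ℝ}
    (h : ∀ η : ℝ, 0 < η → ∃ c : ℝ, ∃ m : ℕ, ∀ n, m < n → r n ≤ c * η ^ (n - m))
    {ε : ℝ} (hε0 : 0 < ε) (hε1 : ε < 1) : ∀ᶠ n in atTop, r n ≤ ε ^ n := by
  obtain ⟨c, m, hc⟩ := h (ε ^ 2) (by positivity)
  have hlim : Tendsto (fun n => c * ε ^ (n - 2 * m)) atTop (𝓝 0) := by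
    simpa using ((tendsto_pow_atTop_nhds_zero_of_lt_one hε0.le hε1).comp
      (tendsto_sub_atTop_nat (2 * m))).const_mul c
  filter_upwards [(hlim.eventually_lt_const one_pos), eventually_gt_atTop (2 * m)] with n h1 h2
  calc r n ≤ c * (ε ^ 2) ^ (n - m) := hc n (by omega)
    _ = c * ε ^ (n - 2 * m) * ε ^ n := by
      rw [← pow_mul, mul_assoc, ← pow_add]; congr 2; omega
    _ ≤ 1 * ε ^ n := by gcongr
    _ = ε ^ n := one_mul _

theorem tendsto_rpow_one_div_of_eventually_le_pow {r : ℕ → ℝ} (h0 : ∀ n, 0 ≤ r n)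
    (h : ∀ ε : ℝ, 0 < ε → ε < 1 → ∀ᶠ n in atTop, r n ≤ ε ^ n) :
    Tendsto (fun n : ℕ => r n ^ ((1 : ℝ) / n)) atTop (𝓝 0) := by
  refine tendsto_order.2 ⟨fun a ha => Eventually.of_forall fun n =>
    ha.trans_le (Real.rpow_nonneg (h0 n) _), fun a ha => ?_⟩
  obtain ⟨ε, hε0, hε⟩ := exists_between (lt_min ha one_pos)
  filter_upwards [h ε hε0 (hε.trans_le (min_le_right _ _)), eventually_gt_atTop 0] with n hn hn0
  calc r n ^ ((1 : ℝ) / n) ≤ (ε ^ n) ^ ((1 : ℝ) / n) :=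
        Real.rpow_le_rpow (h0 n) hn (by positivity)
    _ = ε := by rw [one_div, Real.pow_rpow_inv_natCast hε0.le hn0.ne']
    _ < a := hε.trans_le (min_le_left _ _)

end TMS

theorem stmt6_general {S : Type*} [TopologicalSpace S]
    (A M : S → S → Prop) (hMA : ∀ a b, M a b → A a b)
    (φ : (ℕ → S) → ℝ) (hφ : TMS.SummableOn (TMS.markovShift A) φ)
    (hnoper : ¬ TMS.HasPeriodicPoint (TMS.markovShift M)) :
    TMS.specRad (TMS.supNorm (TMS.markovShift A)) (TMS.Cb (TMS.markovShift A))
        (TMS.transfer M φ) = 0 ∧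
      (∀ l : List S, l.Chain' M → l.Nodup) ∧
      (∀ η : ℝ, 0 < η → ∃ c : ℝ, 0 < c ∧ ∃ m : ℕ, ∀ n : ℕ, m < n →
        TMS.supNorm (TMS.markovShift A) ((TMS.transfer M φ)^[n] (fun _ => (1 : ℝ))) ≤
          c * η ^ (n - m)) := by
  have hM := TMS.not_reaches_self_of_not_hasPeriodicPoint hnoper
  have hdecay := fun η (hη : 0 < η) => TMS.exists_supNorm_transfer_iterate_le hMA hM hφ hη
  refine ⟨?_, fun l => TMS.nodup_of_isChain hM, fun η hη => ?_⟩
  · refine (TMS.tendsto_rpow_one_div_of_eventually_le_pow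
      (fun n => TMS.opNorm_nonneg (TMS.supNorm_nonneg _)) fun ε hε0 hε1 =>
        TMS.eventually_le_pow_of_forall_le_mul_pow (fun η hη => ?_) hε0 hε1).limsup_eq
    obtain ⟨c, hc, m, h⟩ := hdecay η hη
    exact ⟨c, m, fun n _ => TMS.opNorm_le (fun f hf hf1 =>
      h n f fun ω hω => (TMS.abs_le_supNorm hf.2 hω).trans hf1) (by positivity)⟩
  · obtain ⟨c, hc, m, h⟩ := hdecay η hη
    exact ⟨c, hc, m, fun n _ => h n _ fun _ _ => by simp⟩

/-- if `X_M` has no periodic point, then every `M`-admissible word has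
pairwise distinct symbols, `‖L_M^n 1‖_∞ ≤ c ηⁿ⁻ᵐ`, and the spectral radius of `L_M`
on `C_b(X)` is zero. -/
theorem stmt6 {S : Type*} [Countable S] [TopologicalSpace S] [DiscreteTopology S]
    (A M : S → S → Prop) (hMA : ∀ a b, M a b → A a b)
    (hA : TMS.FinitelyIrreducible A)
    (φ : (ℕ → S) → ℝ) (hφ : TMS.SummableOn (TMS.markovShift A) φ)
    (hnoper : ¬ TMS.HasPeriodicPoint (TMS.markovShift M)) :
    TMS.specRad (TMS.supNorm (TMS.markovShift A)) (TMS.Cb (TMS.markovShift A))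
        (TMS.transfer M φ) = 0 ∧
      (∀ l : List S, l.Chain' M → l.Nodup) ∧
      (∀ η : ℝ, 0 < η → ∃ c : ℝ, 0 < c ∧ ∃ m : ℕ, ∀ n : ℕ, m < n →
        TMS.supNorm (TMS.markovShift A) ((TMS.transfer M φ)^[n] (fun _ => (1 : ℝ))) ≤
          c * η ^ (n - m)) :=
  stmt6_general A M hMA φ hφ hnoper
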